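/- Suppose the module M itself is semi-S-factorable (i.e., E = M is semi-S-factorable). Then R is présimplifiable in S \ Z(M), meaning: for every s ∈ S \ Z(M) and r ∈ R, s = r·s implies r ∈ U(R) or s = 0. Moreover, for elements of S \ Z(M) the three notions of irreducibility (irreducible, strongly irreducible, very strongly irreducible) coincide, and for pairs of elements of S \ Z(M) the three associate relations ∼, ≈, ≅ coincide. -/

import Mathlib

namespace FactorizationPaper

variable {R : Type*} [CommRing R]

/-- `S` is a saturated multiplicatively closed subset of `R`:
it contains `1`, is closed under multiplication, and `x*y ∈ S` implies `x ∈ S` and `y ∈ S`. -/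
def Saturated (S : Set R) : Prop :=
  1 ∈ S ∧ (∀ x ∈ S, ∀ y ∈ S, x * y ∈ S) ∧ ∀ x y : R, x * y ∈ S → x ∈ S ∧ y ∈ S

/-- The submonoid of `R` associated to a saturated multiplicatively closed set. -/
def Saturated.submonoid {S : Set R} (hS : Saturated S) : Submonoid R where
  carrier := S
  one_mem' := hS.1
  mul_mem' := fun {a b} ha hb => hS.2.1 a ha b hb

section ElementDefs

variable (S : Set R) {N : Type*} [AddCommGroup N] [Module R N]

/-- `m ∼^S n` : `m` and `n` are S-associates. -/
def SAssoc (m n : N) : Prop := (∃ s ∈ S, m = s • n) ∧ (∃ s ∈ S, n = s • m)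

/-- `m ≈^S n` : `m` and `n` are S-strong associates. -/
def SStrongAssoc (m n : N) : Prop := ∃ u : R, IsUnit u ∧ u ∈ S ∧ m = u • n

/-- `m ≅^S n` : `m` and `n` are S-very strong associates. -/
def SVeryStrongAssoc (m n : N) : Prop :=
  SAssoc S m n ∧ ((m = 0 ∧ n = 0) ∨ ∀ s ∈ S, m = s • n → IsUnit s)

/-- `m` is S-primitive. -/
def SPrimitive (m : N) : Prop := ∀ s ∈ S, ∀ n : N, m = s • n → SAssoc S n m

/-- `m` is S-strongly primitive. -/
def SStronglyPrimitive (m : N) : Prop := ∀ s ∈ S, ∀ n : N, m = s • n → SStrongAssoc S n m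

/-- `m` is S-very strongly primitive. -/
def SVeryStronglyPrimitive (m : N) : Prop := ∀ s ∈ S, ∀ n : N, m = s • n → SVeryStrongAssoc S n m

/-- the three kinds of S-primitivity, indexed by `Fin 3` :
`0` = primitive, `1` = strongly primitive, `2` = very strongly primitive. -/
def PrimOf (k : Fin 3) (m : N) : Prop :=
  match k with
  | 0 => SPrimitive S m
  | 1 => SStronglyPrimitive S m
  | 2 => SVeryStronglyPrimitive S m

/-- `m = s • n` is a compact S-atomic factorization of `m`. -/
def IsCompactFactorization (m : N) (s : R) (n : N) : Prop :=
  s ∈ S ∧ SPrimitive S n ∧ m = s • n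

/-- `m = s₁ ⋯ s_k • n` (with the `sᵢ` the members of the list `l`, nonunits in `S`)
is an S-factorization of `m`, of length `l.length`. -/
def IsSFactorization (m : N) (l : List R) (n : N) : Prop :=
  (∀ s ∈ l, s ∈ S ∧ ¬ IsUnit s) ∧ m = l.prod • n

end ElementDefs

/-- `a ∼ b` : associates in `R` (i.e. S-associates with `S = R`, in `R` as an `R`-module). -/
def Assoc (a b : R) : Prop := SAssoc (Set.univ : Set R) a b

/-- `a ≈ b` : strong associates in `R`. -/
def StrongAssoc (a b : R) : Prop := SStrongAssoc (Set.univ : Set R) a b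

/-- `a ≅ b` : very strong associates in `R`. -/
def VeryStrongAssoc (a b : R) : Prop := SVeryStrongAssoc (Set.univ : Set R) a b

/-- `a` is irreducible. -/
def Irred (a : R) : Prop := ¬ IsUnit a ∧ ∀ b c : R, a = b * c → Assoc a b ∨ Assoc a c

/-- `a` is strongly irreducible. -/
def StrongIrred (a : R) : Prop :=
  ¬ IsUnit a ∧ ∀ b c : R, a = b * c → StrongAssoc a b ∨ StrongAssoc a c

/-- `a` is very strongly irreducible. -/
def VeryStrongIrred (a : R) : Prop :=
  ¬ IsUnit a ∧ ∀ b c : R, a = b * c → VeryStrongAssoc a b ∨ VeryStrongAssoc a c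

/-- the three kinds of irreducibility, indexed by `Fin 3` :
`0` = irreducible, `1` = strongly irreducible, `2` = very strongly irreducible. -/
def IrredOf (k : Fin 3) (a : R) : Prop :=
  match k with
  | 0 => Irred a
  | 1 => StrongIrred a
  | 2 => VeryStrongIrred a

section ElementDefs2

variable (S : Set R) {N : Type*} [AddCommGroup N] [Module R N]

/-- `m = s₁ ⋯ s_k • n` is an S-atomic factorization
(each `sᵢ` irreducible and in `S`, `n` S-primitive). -/
def IsSAtomicFactorization (m : N) (l : List R) (n : N) : Prop :=
  IsSFactorization S m l n ∧ (∀ s ∈ l, Irred s) ∧ SPrimitive S n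

/-- an (α, β)-S-factorization: each `sᵢ` is α (a kind of irreducible)
and `n` is S-β (a kind of S-primitive). -/
def IsABFactorization (kα kβ : Fin 3) (m : N) (l : List R) (n : N) : Prop :=
  IsSFactorization S m l n ∧ (∀ s ∈ l, IrredOf kα s) ∧ PrimOf S kβ n

/-- Isomorphism of S-atomic factorizations: same length, S-associate primitive parts,
and the irreducible parts match up to permutation and associates. -/
def FactorIso (l : List R) (n : N) (l' : List R) (n' : N) : Prop :=
  l.length = l'.length ∧ SAssoc S n n' ∧
    ∃ l'' : List R, l'.Perm l'' ∧ List.Forall₂ Assoc l l''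

end ElementDefs2

section SetDefs

variable (S : Set R) {N : Type*} [AddCommGroup N] [Module R N]

/-- `E ⊆ N` is compactly S-atomic. -/
def CompactlySAtomic (E : Set N) : Prop :=
  ∀ m ∈ E, m ≠ 0 → ∃ s n, IsCompactFactorization S m s n

/-- `E ⊆ N` is semi-S-factorable. -/
def SemiSFactorable (E : Set N) : Prop :=
  CompactlySAtomic S E ∧ ∀ m ∈ E, m ≠ 0 → ∀ s n s' n',
    IsCompactFactorization S m s n → IsCompactFactorization S m s' n' → Assoc s s'

/-- `E ⊆ N` is S-factorable. -/
def SFactorable (E : Set N) : Prop :=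
  SemiSFactorable S E ∧ ∀ m ∈ E, m ≠ 0 → ∀ s n s' n',
    IsCompactFactorization S m s n → IsCompactFactorization S m s' n' → SAssoc S n n'

/-- `S` splits `E ⊆ N`. -/
def Splits (E : Set N) : Prop :=
  SemiSFactorable S E ∧
    ∀ r : R, SPrimitive S r → ∀ m : N, SPrimitive S m →
      r • m ≠ 0 → r • m ∈ E → SPrimitive S (r • m)

end SetDefs

/-- The set of zero divisors of the module `M` in `R`. -/
def ZDiv (R : Type*) [CommRing R] (M : Type*) [AddCommGroup M] [Module R M] : Set R :=
  {r : R | ∃ m : M, m ≠ 0 ∧ r • m = 0}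

/-- The annihilator of `M` in `R`, as a set. -/
def AnnSet (R : Type*) [CommRing R] (M : Type*) [AddCommGroup M] [Module R M] : Set R :=
  {r : R | ∀ m : M, r • m = 0}

/-- The annihilator of `M` in `R`, as an ideal. -/
def AnnIdeal (R : Type*) [CommRing R] (M : Type*) [AddCommGroup M] [Module R M] : Ideal R where
  carrier := AnnSet R M
  zero_mem' := fun m => zero_smul R m
  add_mem' := fun {a b} ha hb m => by
    rw [add_smul, ha m, hb m, add_zero]
  smul_mem' := fun c x hx m => by
    rw [smul_eq_mul, mul_smul, hx m, smul_zero]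

section ModuleProps

variable (S : Set R) (N : Type*) [AddCommGroup N] [Module R N]

/-- `N` is S-présimplifiable. -/
def SPresimplifiable : Prop := ∀ s ∈ S, ∀ m : N, s • m = m → IsUnit s ∨ m = 0

/-- `N` is S-atomic. -/
def SAtomicModule : Prop := ∀ m : N, m ≠ 0 → ∃ l n, IsSAtomicFactorization S m l n

/-- `N` is (α, β)-S-atomic. -/
def ABAtomicModule (kα kβ : Fin 3) : Prop :=
  ∀ m : N, m ≠ 0 → ∃ l n, IsABFactorization S kα kβ m l n

/-- `N` is an S-UFM. -/
def SUFM : Prop := SAtomicModule S N ∧ ∀ m : N, m ≠ 0 → ∀ l n l' n',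
  IsSAtomicFactorization S m l n → IsSAtomicFactorization S m l' n' → FactorIso S l n l' n'

/-- `N` is an S-FFM. -/
def SFFM : Prop := SAtomicModule S N ∧ ∀ m : N, m ≠ 0 →
  ∃ Fs : Set (List R × N), Fs.Finite ∧
    ∀ l n, IsSAtomicFactorization S m l n → ∃ p ∈ Fs, FactorIso S l n p.1 p.2

/-- `N` is an S-BFM. -/
def SBFM : Prop := ∀ m : N, m ≠ 0 → ∃ B : ℕ,
  ∀ l n, IsSFactorization S m l n → l.length ≤ B

/-- `N` is an S-HFM. -/
def SHFM : Prop := SAtomicModule S N ∧ ∀ m : N, m ≠ 0 → ∀ l n l' n',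
  IsSAtomicFactorization S m l n → IsSAtomicFactorization S m l' n' → l.length = l'.length

end ModuleProps

section InE

variable (E : Set R)

/-- `R` is présimplifiable in `E`. -/
def PresimpIn : Prop := ∀ a ∈ E, a ≠ 0 → ¬ IsUnit a → ∀ r : R, a = r * a → IsUnit r ∨ a = 0

/-- `R` is atomic in `E`. -/
def AtomicIn : Prop := ∀ a ∈ E, a ≠ 0 → ¬ IsUnit a →
  ∃ l n, IsSAtomicFactorization (Set.univ : Set R) a l n

/-- `R` has unique factorization in `E`. -/
def UFIn : Prop := AtomicIn E ∧ ∀ a ∈ E, a ≠ 0 → ¬ IsUnit a → ∀ l n l' n',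
  IsSAtomicFactorization (Set.univ : Set R) a l n →
  IsSAtomicFactorization (Set.univ : Set R) a l' n' →
  FactorIso (Set.univ : Set R) l n l' n'

/-- `R` has finite factorization in `E`. -/
def FFIn : Prop := AtomicIn E ∧ ∀ a ∈ E, a ≠ 0 → ¬ IsUnit a →
  ∃ Fs : Set (List R × R), Fs.Finite ∧ ∀ l n,
    IsSAtomicFactorization (Set.univ : Set R) a l n →
      ∃ p ∈ Fs, FactorIso (Set.univ : Set R) l n p.1 p.2

/-- `R` is half factorial in `E`. -/
def HFIn : Prop := AtomicIn E ∧ ∀ a ∈ E, a ≠ 0 → ¬ IsUnit a → ∀ l n l' n',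
  IsSAtomicFactorization (Set.univ : Set R) a l n →
  IsSAtomicFactorization (Set.univ : Set R) a l' n' → l.length = l'.length

/-- `R` has bounded factorization in `E`. -/
def BFIn : Prop := ∀ a ∈ E, a ≠ 0 → ¬ IsUnit a →
  ∃ B : ℕ, ∀ l n, IsSFactorization (Set.univ : Set R) a l n → l.length ≤ B

end InE

/-- The set `T = S⁻¹S'` in the localization `R_S`. -/
def locT {S : Set R} (hS : Saturated S) (S' : Set R) : Set (Localization hS.submonoid) :=
  {x | ∃ s' ∈ S', ∃ t : hS.submonoid, x = Localization.mk s' t}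

section DomainDefs

variable (D : Type*) [CommRing D]

/-- two lists of ring elements agree up to order and associates. -/
def ListAssociated (l l' : List D) : Prop :=
  ∃ l'' : List D, l'.Perm l'' ∧ List.Forall₂ Associated l l''

/-- `D` is atomic: every nonzero nonunit is a finite product of irreducibles. -/
def DomAtomic : Prop := ∀ x : D, x ≠ 0 → ¬ IsUnit x →
  ∃ l : List D, (∀ a ∈ l, Irreducible a) ∧ x = l.prod

/-- `D` is a bounded factorization domain. -/
def DomBFD : Prop := ∀ x : D, x ≠ 0 → ¬ IsUnit x →
  ∃ B : ℕ, ∀ l : List D, (∀ a ∈ l, ¬ IsUnit a) → x = l.prod → l.length ≤ B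

/-- `D` is a half factorial domain. -/
def DomHFD : Prop := DomAtomic D ∧ ∀ x : D, x ≠ 0 → ¬ IsUnit x →
  ∀ l l' : List D, (∀ a ∈ l, Irreducible a) → x = l.prod →
    (∀ a ∈ l', Irreducible a) → x = l'.prod → l.length = l'.length

/-- `D` is a finite factorization domain. -/
def DomFFD : Prop := DomAtomic D ∧ ∀ x : D, x ≠ 0 → ¬ IsUnit x →
  ∃ Fs : Set (List D), Fs.Finite ∧ ∀ l : List D, (∀ a ∈ l, Irreducible a) → x = l.prod →
    ∃ l' ∈ Fs, ListAssociated D l l'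

/-- `D` is a unique factorization domain. -/
def DomUFD : Prop := DomAtomic D ∧ ∀ x : D, x ≠ 0 → ¬ IsUnit x →
  ∀ l l' : List D, (∀ a ∈ l, Irreducible a) → x = l.prod →
    (∀ a ∈ l', Irreducible a) → x = l'.prod → ListAssociated D l l'

end DomainDefs

section AXBXdefs

variable (B : Type*) [CommRing B] (A : Subring B)

/-- The ring `R = A + X·B[X]`, as a subring of `B[X]`. -/
def AXBX : Subring (Polynomial B) where
  carrier := {f | f.coeff 0 ∈ A}
  zero_mem' := by simp only [Set.mem_setOf_eq, Polynomial.coeff_zero]; exact zero_mem A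
  one_mem' := by
    simp only [Set.mem_setOf_eq, Polynomial.coeff_one, if_pos rfl]
    exact one_mem A
  add_mem' := fun {f g} hf hg => by
    simp only [Set.mem_setOf_eq, Polynomial.coeff_add] at *
    exact add_mem hf hg
  neg_mem' := fun {f} hf => by
    simp only [Set.mem_setOf_eq, Polynomial.coeff_neg] at *
    exact neg_mem hf
  mul_mem' := fun {f g} hf hg => by
    simp only [Set.mem_setOf_eq, Polynomial.mul_coeff_zero] at *
    exact mul_mem hf hg

/-- The saturated multiplicatively closed subset `S = (U(B) ∩ A) ∪ {u·Xⁿ : u ∈ U(B), n ≥ 1}`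
of `R = A + X·B[X]`. -/
def Sset : Set (AXBX B A) :=
  {f | (∃ u : B, IsUnit u ∧ u ∈ A ∧ (f : Polynomial B) = Polynomial.C u) ∨
       (∃ u : B, IsUnit u ∧ ∃ n : ℕ, 1 ≤ n ∧
          (f : Polynomial B) = Polynomial.C u * Polynomial.X ^ n)}

/-- The saturated multiplicatively closed subset `S₀ = U(B) ∩ A` of `A`. -/
def S0set : Set A := {a : A | IsUnit (a : B)}

end AXBXdefs

/-!
If `s ∈ S` is not a zero divisor of `M` and `s = r s`, then cancelling `s` gives `n = r • n` for
every `n ∈ M`. Taking `n` nonzero and `S`-primitive (which exists since `M` is compactly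
`S`-atomic), `n = 1 • n = r • n` are two compact factorizations, so `r ∼ 1` and `r` is a unit.
Once `a = r a` forces `r` to be a unit, `a = x b`, `b = y a` gives `a = (x y) a`, so `x` is a
unit: associates of `a` are strong and very strong associates, and the three notions of
irreducibility of `a` agree.
-/

section Associates

variable {a b : R}

theorem StrongAssoc.assoc (h : StrongAssoc a b) : Assoc a b := by
  obtain ⟨u, ⟨v, rfl⟩, -, hab⟩ := h
  refine ⟨⟨v, trivial, hab⟩, ⟨↑v⁻¹, trivial, ?_⟩⟩
  rw [hab, smul_eq_mul, smul_eq_mul, ← mul_assoc, Units.inv_mul, one_mul]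

theorem Assoc.isUnit_of_eq_mul (hab : Assoc a b) (ha : ∀ r : R, a = r * a → IsUnit r) {x : R}
    (hx : a = x * b) : IsUnit x := by
  obtain ⟨-, ⟨y, -, hy⟩⟩ := hab
  rw [smul_eq_mul] at hy
  have hxy : IsUnit (x * y) := ha _ (by rw [mul_assoc, ← hy, ← hx])
  exact isUnit_of_mul_isUnit_left hxy

theorem Assoc.strongAssoc (h : Assoc a b) (ha : ∀ r : R, a = r * a → IsUnit r) :
    StrongAssoc a b := by
  obtain ⟨x, -, hx⟩ := h.1
  exact ⟨x, h.isUnit_of_eq_mul ha hx, trivial, hx⟩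

theorem Assoc.veryStrongAssoc (h : Assoc a b) (ha : ∀ r : R, a = r * a → IsUnit r) :
    VeryStrongAssoc a b :=
  ⟨h, Or.inr fun _ _ hx => h.isUnit_of_eq_mul ha hx⟩

theorem assoc_iff_strongAssoc (ha : ∀ r : R, a = r * a → IsUnit r) :
    Assoc a b ↔ StrongAssoc a b :=
  ⟨fun h => h.strongAssoc ha, StrongAssoc.assoc⟩

theorem assoc_iff_veryStrongAssoc (ha : ∀ r : R, a = r * a → IsUnit r) :
    Assoc a b ↔ VeryStrongAssoc a b :=
  ⟨fun h => h.veryStrongAssoc ha, fun h => h.1⟩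

theorem irred_iff_strongIrred (ha : ∀ r : R, a = r * a → IsUnit r) :
    Irred a ↔ StrongIrred a :=
  and_congr_right' <| forall₂_congr fun _ _ =>
    imp_congr_right fun _ => or_congr (assoc_iff_strongAssoc ha) (assoc_iff_strongAssoc ha)

theorem irred_iff_veryStrongIrred (ha : ∀ r : R, a = r * a → IsUnit r) :
    Irred a ↔ VeryStrongIrred a :=
  and_congr_right' <| forall₂_congr fun _ _ =>
    imp_congr_right fun _ =>
      or_congr (assoc_iff_veryStrongAssoc ha) (assoc_iff_veryStrongAssoc ha)

end Associates

section Module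

variable {M : Type*} [AddCommGroup M] [Module R M] {S : Set R}

theorem isUnit_of_assoc_one {r : R} (h : Assoc 1 r) : IsUnit r := by
  obtain ⟨⟨x, -, hx⟩, -⟩ := h
  exact .of_mul_eq_one x (by rw [hx, smul_eq_mul, mul_comm])

theorem SemiSFactorable.isUnit_of_smul_eq_self {E : Set M} (hE : SemiSFactorable S E)
    (h1 : 1 ∈ S) {n : M} (hnE : n ∈ E) (hn0 : n ≠ 0) (hn : SPrimitive S n) {r : R}
    (hr : r ∈ S) (hrn : n = r • n) : IsUnit r :=
  isUnit_of_assoc_one <| hE.2 n hnE hn0 1 n r n ⟨h1, hn, (one_smul R n).symm⟩ ⟨hr, hn, hrn⟩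

theorem CompactlySAtomic.exists_ne_zero_sPrimitive [Nontrivial M]
    (hM : CompactlySAtomic S (Set.univ : Set M)) : ∃ n : M, n ≠ 0 ∧ SPrimitive S n := by
  obtain ⟨m, hm⟩ := exists_ne (0 : M)
  obtain ⟨s, n, -, hn, rfl⟩ := hM m trivial hm
  exact ⟨n, right_ne_zero_of_smul hm, hn⟩

theorem smul_left_cancel_of_notMem_zDiv {s : R} (hs : s ∉ ZDiv R M) {x y : M}
    (h : s • x = s • y) : x = y := by
  by_contra hxy
  exact hs ⟨x - y, sub_ne_zero.mpr hxy, by rw [smul_sub, h, sub_self]⟩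

theorem SemiSFactorable.isUnit_of_eq_mul_self [Nontrivial M] (hS : Saturated S)
    (hM : SemiSFactorable S (Set.univ : Set M)) {s : R} (hs : s ∈ S \ ZDiv R M) {r : R}
    (hrs : s = r * s) : IsUnit r := by
  have hr : r ∈ S := (hS.2.2 r s (hrs ▸ hs.1)).1
  obtain ⟨n, hn0, hn⟩ := hM.1.exists_ne_zero_sPrimitive
  have hrn : n = r • n :=
    smul_left_cancel_of_notMem_zDiv hs.2 (by rw [smul_smul, mul_comm, ← hrs])
  exact hM.isUnit_of_smul_eq_self hS.1 trivial hn0 hn hr hrn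

end Module

theorem statement1 {R : Type*} [CommRing R] {M : Type*} [AddCommGroup M] [Module R M]
    [Nontrivial M] (S : Set R) (hS : Saturated S)
    (hM : SemiSFactorable S (Set.univ : Set M)) :
    (∀ s ∈ S \ ZDiv R M, ∀ r : R, s = r * s → IsUnit r ∨ s = 0) ∧
    (∀ a ∈ S \ ZDiv R M,
      (Irred a ↔ StrongIrred a) ∧ (Irred a ↔ VeryStrongIrred a)) ∧
    (∀ a ∈ S \ ZDiv R M, ∀ b ∈ S \ ZDiv R M,
      (Assoc a b ↔ StrongAssoc a b) ∧ (Assoc a b ↔ VeryStrongAssoc a b)) := by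
  have presimp : ∀ a ∈ S \ ZDiv R M, ∀ r : R, a = r * a → IsUnit r :=
    fun _ ha _ => hM.isUnit_of_eq_mul_self hS ha
  refine ⟨fun s hs r hrs => Or.inl (presimp s hs r hrs), fun a ha => ?_, fun a ha b _ => ?_⟩
  · exact ⟨irred_iff_strongIrred (presimp a ha), irred_iff_veryStrongIrred (presimp a ha)⟩
  · exact ⟨assoc_iff_strongAssoc (presimp a ha), assoc_iff_veryStrongAssoc (presimp a ha)⟩

end FactorizationPaper
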